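/- Under Assumption *, suppose (μ,Λ) is a spectral pair with 0 ∈ Λ, and let ν = ν_{>1}. Then for each γ ∈ [0,N_1) ∩ ℚ, the set P(γ) = {ω ∈ ℤ : γ + N_1ω ∈ Λ} is either empty or an orthogonal set of ν. -/

import Mathlib

open MeasureTheory Filter Topology Complex Polynomial

/-- The exponential function `e_l(x) = e^{-2πi l x}`. -/
noncomputable def expFun (l x : ℝ) : ℂ :=
  Complex.exp (((-2 * Real.pi * l * x : ℝ) : ℂ) * Complex.I)

/-- The Fourier transform `μ̂(ξ) = ∫ e^{-2πiξx} dμ(x)` of a measure on `ℝ`. -/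
noncomputable def ft (μ : Measure ℝ) (ξ : ℝ) : ℂ := ∫ x, expFun ξ x ∂μ

/-- `Λ` is an orthogonal (orthonormal) set for `μ`: the exponentials `e_λ`, `λ ∈ Λ`, form an
orthonormal family in `L²(μ)`. -/
def IsOrthoSet (μ : Measure ℝ) (Λ : Set ℝ) : Prop :=
  ∀ l₁ ∈ Λ, ∀ l₂ ∈ Λ,
    (∫ x, (starRingEnd ℂ) (expFun l₁ x) * expFun l₂ x ∂μ) = if l₁ = l₂ then 1 else 0

/-- `(μ, Λ)` is a spectral pair: the exponentials `{e_λ : λ ∈ Λ}` form an orthonormal family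
which is maximal (total) in `L²(μ)`, i.e. an orthonormal basis of `L²(μ)`. -/
def IsSpectralPair (μ : Measure ℝ) (Λ : Set ℝ) : Prop :=
  IsOrthoSet μ Λ ∧
  ∀ f : ℝ → ℂ, MemLp f 2 μ →
    (∀ l ∈ Λ, (∫ x, (starRingEnd ℂ) (expFun l x) * f x ∂μ) = 0) → f =ᵐ[μ] 0

/-- `μ` is a spectral measure: some countable `Λ ⊆ ℝ` is a spectrum of `μ`. -/
def IsSpectralMeasure (μ : Measure ℝ) : Prop :=
  ∃ Λ : Set ℝ, Λ.Countable ∧ IsSpectralPair μ Λ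

/-- The uniform probability measure `δ_A` on a finite set `A ⊆ ℝ`. -/
noncomputable def uniformD (A : Finset ℝ) : Measure ℝ :=
  (A.card : ENNReal)⁻¹ • ∑ a ∈ A, Measure.dirac a

/-- The measure `δ_{c⁻¹ B}` for a finite set `B ⊆ ℤ` and a scaling factor `c`. -/
noncomputable def scaledB (B : Finset ℤ) (c : ℝ) : Measure ℝ :=
  uniformD (B.image fun b : ℤ => (b : ℝ) / c)

/-- The finite convolutions `μ_k = δ_{N₁⁻¹B₁} ∗ δ_{(N₁N₂)⁻¹B₂} ∗ ⋯ ∗ δ_{(N₁⋯N_k)⁻¹B_k}`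
(the sequences are indexed starting from `k = 1`; `μ_0 = δ_0`). -/
noncomputable def partialConv (N : ℕ → ℕ) (B : ℕ → Finset ℤ) : ℕ → Measure ℝ
  | 0 => Measure.dirac 0
  | k + 1 =>
      MeasureTheory.Measure.conv (partialConv N B k)
        (scaledB (B (k + 1)) (∏ i ∈ Finset.Icc 1 (k + 1), (N i : ℝ)))

/-- `μ` is the infinite convolution of `{(N_k, B_k)}_{k=1}^∞`: it is a Borel probability
measure and the finite convolutions `μ_k` converge weakly to `μ`. -/
def IsInfiniteConv (N : ℕ → ℕ) (B : ℕ → Finset ℤ) (μ : Measure ℝ) : Prop :=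
  IsProbabilityMeasure μ ∧
    ∀ f : BoundedContinuousFunction ℝ ℝ,
      Tendsto (fun k => ∫ x, f x ∂(partialConv N B k)) atTop (𝓝 (∫ x, f x ∂μ))

/-- `ν` is the tail infinite convolution `ν_{>k} = δ_{N_{k+1}⁻¹B_{k+1}} ∗ ⋯`. -/
def IsNuGt (N : ℕ → ℕ) (B : ℕ → Finset ℤ) (k : ℕ) (ν : Measure ℝ) : Prop :=
  IsInfiniteConv (fun j => N (k + j)) (fun j => B (k + j)) ν

/-- A family of measures is tight. -/
def IsTightFamily {ι : Type*} (Φ : ι → Measure ℝ) : Prop :=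
  ∀ ε : ENNReal, 0 < ε → ∃ K : Set ℝ, IsCompact K ∧ ∀ i, 1 - ε < Φ i K

/-- `B` is a complete residue system modulo `M`: each residue class modulo `M` contains
exactly one element of `B`. -/
def IsCRS (B : Finset ℤ) (M : ℕ) : Prop :=
  ∀ r : ZMod M, ∃! b : ℤ, b ∈ B ∧ ((b : ZMod M) = r)

/-- `∑_{b ∈ B} x^{b - b⁎}` where `b⁎ = min B`, i.e. `x^{-b⁎} ∑_{b ∈ B} x^b`. -/
noncomputable def numerPoly (B : Finset ℤ) : Polynomial ℤ :=
  ∑ b ∈ B, Polynomial.X ^ (b - (WithTop.untopD 0 B.min)).toNat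

/-- `∑_{k=0}^{n-1} x^k`. -/
noncomputable def geomPoly (n : ℕ) : Polynomial ℤ :=
  ∑ k ∈ Finset.range n, Polynomial.X ^ k

/-- The character polynomial `f_B(x) = (∑_{b∈B} x^b)/(x^{b⁎} ∑_{k=0}^{#B-1} x^k)`,
obtained by dividing by the monic polynomial `∑_{k=0}^{#B-1} x^k`. -/
noncomputable def charPoly (B : Finset ℤ) : Polynomial ℤ :=
  numerPoly B /ₘ geomPoly B.card

/-- `B` (a complete residue system modulo `M`) satisfies the uniform discrete zero
condition: `Z(f_B ∘ e^{-2πix}) ⊆ {j/M : j ∈ ℤ ∖ Mℤ}`. -/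
def SatisfiesUDZ (B : Finset ℤ) (M : ℕ) : Prop :=
  {x : ℝ | Polynomial.aeval (expFun x 1) (charPoly B) = 0} ⊆
    {x : ℝ | ∃ j : ℤ, ¬ ((M : ℤ) ∣ j) ∧ x = (j : ℝ) / M}

/-- `M_B(ξ) = (1/#B) ∑_{b∈B} e^{-2πibξ}`, the Fourier transform of `δ_B`. -/
noncomputable def MB (B : Finset ℤ) (ξ : ℝ) : ℂ :=
  (B.card : ℂ)⁻¹ * ∑ b ∈ B, expFun (b : ℝ) ξ

/-- `Q_{μ,Λ}(ξ) = ∑_{λ ∈ Λ} |μ̂(ξ+λ)|²`. -/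
noncomputable def Qf (μ : Measure ℝ) (Λ : Set ℝ) (ξ : ℝ) : ℝ :=
  ∑' l : Λ, ‖ft μ (ξ + (l : ℝ))‖ ^ 2

/-- `P(γ) = {ω ∈ ℤ : γ + N₁ω ∈ Λ}`. -/
def Pset (Λ : Set ℝ) (N1 γ : ℝ) : Set ℤ := {ω : ℤ | γ + N1 * (ω : ℝ) ∈ Λ}

/-- The translated set `γ/N₁ + P(γ)`, viewed as a subset of `ℝ`. -/
def PsetT (Λ : Set ℝ) (N1 γ : ℝ) : Set ℝ :=
  {x : ℝ | ∃ ω : ℤ, x = γ / N1 + (ω : ℝ) ∧ γ + N1 * (ω : ℝ) ∈ Λ}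

/-- `Γ₀ = {0, N₁/M₁, 2N₁/M₁, …, (M₁-1)N₁/M₁}`. -/
def Gamma0 (N1 M1 : ℕ) : Set ℝ :=
  {x : ℝ | ∃ t : ℕ, t < M1 ∧ x = (t : ℝ) * ((N1 : ℝ) / (M1 : ℝ))}

/-! Peeling off the first factor writes `μ` as `δ_{N₁⁻¹B₁}` convolved with the image of `ν`
under `x ↦ x/N₁`, so `μ̂(ξ) = M_{B₁}(ξ/N₁) ν̂(ξ/N₁)`; this is checked on the finite
convolutions and passes to the weak limits. At `ξ = N₁m` with `m ∈ ℤ` the mask `M_{B₁}` equals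
`1`, so `ν̂(m) = μ̂(N₁m)`. For `ω, ω' ∈ P(γ)` this gives
`ν̂(ω' - ω) = μ̂((γ + N₁ω') - (γ + N₁ω))`, which is `0` for `ω ≠ ω'` by the orthogonality of `Λ`.
-/

lemma continuous_expFun (l : ℝ) : Continuous (expFun l) := by
  unfold expFun; fun_prop

lemma norm_expFun (l x : ℝ) : ‖expFun l x‖ = 1 := by
  simp [expFun, Complex.norm_exp]

lemma expFun_add (l x y : ℝ) : expFun l (x + y) = expFun l x * expFun l y := by
  rw [expFun, expFun, expFun, ← Complex.exp_add]; congr 1; push_cast; ring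

lemma conj_expFun_mul_expFun (l₁ l₂ x : ℝ) :
    (starRingEnd ℂ) (expFun l₁ x) * expFun l₂ x = expFun (l₂ - l₁) x := by
  rw [expFun, expFun, expFun, ← Complex.exp_conj, ← Complex.exp_add]
  congr 1
  simp only [map_mul, Complex.conj_ofReal, Complex.conj_I]
  push_cast; ring

lemma expFun_intCast_intCast (b m : ℤ) : expFun b m = 1 := by
  rw [expFun, ← Complex.exp_int_mul_two_pi_mul_I (-(b * m))]; congr 1; push_cast; ring

lemma integrable_expFun (ρ : Measure ℝ) [IsFiniteMeasure ρ] (l : ℝ) : Integrable (expFun l) ρ :=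
  .of_bound (continuous_expFun l).aestronglyMeasurable 1
    (ae_of_all _ fun x => (norm_expFun l x).le)

lemma integral_conj_expFun_mul_expFun (ρ : Measure ℝ) (l₁ l₂ : ℝ) :
    ∫ x, (starRingEnd ℂ) (expFun l₁ x) * expFun l₂ x ∂ρ = ft ρ (l₂ - l₁) := by
  simp_rw [conj_expFun_mul_expFun]; rfl

lemma ft_conv (ρ σ : Measure ℝ) [IsFiniteMeasure ρ] [IsFiniteMeasure σ] (ξ : ℝ) :
    ft (ρ.conv σ) ξ = ft ρ ξ * ft σ ξ := by
  rw [ft, Measure.conv, integral_map (by fun_prop) (continuous_expFun ξ).aestronglyMeasurable]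
  simp_rw [expFun_add]
  exact integral_prod_mul _ _

lemma MB_intCast {B : Finset ℤ} (hB : B.Nonempty) (m : ℤ) : MB B m = 1 := by
  simp only [MB, expFun_intCast_intCast, Finset.sum_const, nsmul_eq_mul, mul_one]
  exact inv_mul_cancel₀ (by exact_mod_cast hB.card_pos.ne')

lemma ft_scaledB (B : Finset ℤ) {c : ℝ} (hc : c ≠ 0) (ξ : ℝ) :
    ft (scaledB B c) ξ = MB B (ξ / c) := by
  have hinj : Function.Injective fun b : ℤ => (b : ℝ) / c := fun a b h => by
    simpa [div_left_inj' hc] using h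
  rw [ft, scaledB, uniformD, integral_smul_measure,
    integral_finsetSum_measure fun _ _ => integrable_expFun _ ξ]
  simp_rw [integral_dirac]
  rw [Finset.sum_image fun a _ b _ h => hinj h, Finset.card_image_of_injective _ hinj, MB,
    ENNReal.toReal_inv, ENNReal.toReal_natCast, Complex.real_smul]
  push_cast
  congr 1
  refine Finset.sum_congr rfl fun b _ => ?_
  rw [expFun, expFun]; congr 1; push_cast; ring

-- No nonemptiness is needed: `uniformD ∅ = ⊤ • 0 = 0`.
instance isFiniteMeasure_uniformD (A : Finset ℝ) : IsFiniteMeasure (uniformD A) := by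
  refine ⟨lt_of_le_of_lt ?_ ENNReal.one_lt_top⟩
  simp [uniformD, Measure.finsetSum_apply]

instance isFiniteMeasure_scaledB (B : Finset ℤ) (c : ℝ) : IsFiniteMeasure (scaledB B c) :=
  isFiniteMeasure_uniformD _

instance isFiniteMeasure_partialConv (N : ℕ → ℕ) (B : ℕ → Finset ℤ) (k : ℕ) :
    IsFiniteMeasure (partialConv N B k) := by
  induction k with
  | zero => rw [partialConv]; infer_instance
  | succ k ih => rw [partialConv]; infer_instance

lemma prod_Icc_one_succ {M : Type*} [CommMonoid M] (f : ℕ → M) (k : ℕ) :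
    ∏ i ∈ Finset.Icc 1 (k + 1), f i = f 1 * ∏ i ∈ Finset.Icc 1 k, f (1 + i) := by
  induction k with
  | zero => simp
  | succ k ih =>
    rw [Finset.prod_Icc_succ_top (by omega), ih, Finset.prod_Icc_succ_top (by omega), mul_assoc,
      add_comm 1 (k + 1)]

lemma ft_partialConv_succ {N : ℕ → ℕ} (B : ℕ → Finset ℤ) (hN : ∀ i ≥ 1, N i ≠ 0) (k : ℕ)
    (ξ : ℝ) :
    ft (partialConv N B (k + 1)) ξ =
      MB (B 1) (ξ / N 1) *
        ft (partialConv (fun j => N (1 + j)) (fun j => B (1 + j)) k) (ξ / N 1) := by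
  have hprod : ∀ n, ∏ i ∈ Finset.Icc 1 n, (N i : ℝ) ≠ 0 := fun n =>
    Finset.prod_ne_zero_iff.mpr fun i hi => Nat.cast_ne_zero.mpr (hN i (Finset.mem_Icc.mp hi).1)
  have hprod' : ∀ n, ∏ i ∈ Finset.Icc 1 n, (N (1 + i) : ℝ) ≠ 0 := fun n =>
    right_ne_zero_of_mul (prod_Icc_one_succ (fun i => (N i : ℝ)) n ▸ hprod (n + 1))
  induction k with
  | zero =>
    simp only [partialConv, zero_add]
    rw [ft_conv, ft_scaledB _ (hprod 1)]
    simp [ft, expFun]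
  | succ k ih =>
    rw [partialConv, ft_conv, ih, partialConv, ft_conv, ft_scaledB _ (hprod _),
      ft_scaledB _ (hprod' _), prod_Icc_one_succ, div_div, mul_assoc, add_comm 1 (k + 1)]

lemma tendsto_integral_complex_of_real {X : Type*} [TopologicalSpace X] [MeasurableSpace X]
    [OpensMeasurableSpace X] {ι : Type*} {l : Filter ι} {ρ : ι → Measure X} {μ : Measure X}
    [∀ i, IsFiniteMeasure (ρ i)] [IsFiniteMeasure μ]
    (h : ∀ f : BoundedContinuousFunction X ℝ,
      Tendsto (fun i => ∫ x, f x ∂ρ i) l (𝓝 (∫ x, f x ∂μ)))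
    (f : BoundedContinuousFunction X ℂ) :
    Tendsto (fun i => ∫ x, f x ∂ρ i) l (𝓝 (∫ x, f x ∂μ)) := by
  simp_rw [← integral_re_add_im (f.integrable _)]
  have hre := h (Complex.reCLM.compLeftContinuousBounded X f)
  have him := h (Complex.imCLM.compLeftContinuousBounded X f)
  exact ((Complex.continuous_ofReal.tendsto _).comp hre).add
    (((Complex.continuous_ofReal.tendsto _).comp him).mul_const Complex.I)

lemma IsInfiniteConv.tendsto_ft {N : ℕ → ℕ} {B : ℕ → Finset ℤ} {μ : Measure ℝ}
    (h : IsInfiniteConv N B μ) (ξ : ℝ) :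
    Tendsto (fun k => ft (partialConv N B k) ξ) atTop (𝓝 (ft μ ξ)) :=
  haveI := h.1
  tendsto_integral_complex_of_real h.2 <|
    .ofNormedAddCommGroup _ (continuous_expFun ξ) 1 fun x => (norm_expFun ξ x).le

lemma ft_eq_MB_mul_ft_of_isNuGt {N : ℕ → ℕ} {B : ℕ → Finset ℤ} {μ ν : Measure ℝ}
    (hN : ∀ i ≥ 1, N i ≠ 0) (hμ : IsInfiniteConv N B μ) (hν : IsNuGt N B 1 ν) (ξ : ℝ) :
    ft μ ξ = MB (B 1) (ξ / N 1) * ft ν (ξ / N 1) :=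
  tendsto_nhds_unique ((hμ.tendsto_ft ξ).comp (tendsto_add_atTop_nat 1))
    (((hν.tendsto_ft _).const_mul _).congr fun k => (ft_partialConv_succ B hN k ξ).symm)

lemma ft_intCast_of_isNuGt {N : ℕ → ℕ} {B : ℕ → Finset ℤ} {μ ν : Measure ℝ}
    (hN : ∀ i ≥ 1, N i ≠ 0) (hB : (B 1).Nonempty) (hμ : IsInfiniteConv N B μ)
    (hν : IsNuGt N B 1 ν) (m : ℤ) :
    ft ν m = ft μ (N 1 * m) := by
  rw [ft_eq_MB_mul_ft_of_isNuGt hN hμ hν,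
    mul_div_cancel_left₀ _ (Nat.cast_ne_zero.mpr (hN 1 le_rfl)), MB_intCast hB, one_mul]

lemma IsOrthoSet.intCast_image_Pset {μ ν : Measure ℝ} {Λ : Set ℝ} (hΛ : IsOrthoSet μ Λ)
    {a : ℝ} (ha : a ≠ 0) (hft : ∀ m : ℤ, ft ν m = ft μ (a * m)) (γ : ℝ) :
    IsOrthoSet ν (((↑) : ℤ → ℝ) '' Pset Λ a γ) := by
  rintro _ ⟨ω₁, hω₁, rfl⟩ _ ⟨ω₂, hω₂, rfl⟩
  have h := hΛ _ hω₁ _ hω₂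
  rw [integral_conj_expFun_mul_expFun] at h ⊢
  calc ft ν (ω₂ - ω₁) = ft μ ((γ + a * ω₂) - (γ + a * ω₁)) := by
        rw [← Int.cast_sub, hft]; push_cast; ring_nf
    _ = if (ω₁ : ℝ) = ω₂ then 1 else 0 := by rw [h]; simp [ha]

theorem stmt13_general
    (N M : ℕ → ℕ) (B : ℕ → Finset ℤ) (μ : Measure ℝ) (ν : ℕ → Measure ℝ)
    (hM : ∀ k ≥ 1, 2 ≤ M k) (hMN : ∀ k ≥ 1, M k ≤ N k)
    (hCRS : ∀ k ≥ 1, IsCRS (B k) (M k))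
    (hμ : IsInfiniteConv N B μ)
    (hν : ∀ k ≥ 1, IsNuGt N B k (ν k))
    (Λ : Set ℝ) (hΛ : IsSpectralPair μ Λ) :
    ∀ γ : ℝ, (∃ q : ℚ, γ = (q : ℝ)) → 0 ≤ γ → γ < (N 1 : ℝ) →
      Pset Λ (N 1) γ = ∅ ∨ IsOrthoSet (ν 1) (((↑) : ℤ → ℝ) '' Pset Λ (N 1) γ) := by
  intro γ _ _ _
  right
  have hN : ∀ i ≥ 1, N i ≠ 0 := fun i hi => by have := hM i hi; have := hMN i hi; omega
  obtain ⟨b, hb, -⟩ := (hCRS 1 le_rfl 0).exists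
  exact hΛ.1.intCast_image_Pset (Nat.cast_ne_zero.mpr (hN 1 le_rfl))
    (ft_intCast_of_isNuGt hN ⟨b, hb⟩ hμ (hν 1 le_rfl)) γ

theorem stmt13
    (N M : ℕ → ℕ) (B : ℕ → Finset ℤ) (μ : Measure ℝ) (ν : ℕ → Measure ℝ)
    (hM : ∀ k ≥ 1, 2 ≤ M k) (hMN : ∀ k ≥ 1, M k ≤ N k)
    (hCRS : ∀ k ≥ 1, IsCRS (B k) (M k))
    (hUDZ : ∀ k ≥ 1, SatisfiesUDZ (B k) (M k))
    (hμ : IsInfiniteConv N B μ)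
    (hν : ∀ k ≥ 1, IsNuGt N B k (ν k))
    (htight : IsTightFamily fun k => ν (k + 1))
    (Λ : Set ℝ) (hΛ : IsSpectralPair μ Λ) (h0 : (0 : ℝ) ∈ Λ) :
    ∀ γ : ℝ, (∃ q : ℚ, γ = (q : ℝ)) → 0 ≤ γ → γ < (N 1 : ℝ) →
      Pset Λ (N 1) γ = ∅ ∨ IsOrthoSet (ν 1) (((↑) : ℤ → ℝ) '' Pset Λ (N 1) γ) :=
  stmt13_general N M B μ ν hM hMN hCRS hμ hν Λ hΛ
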